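/- arXiv:0901.1283 — 2 statements merged into one kernel-verified Lean document; each statement's English description precedes it below -/
import Mathlib

section
/- Consider the Nicholson's blowflies equation with distributed delay under hypotheses (a2), (a4), (a5). If δ < p < δ·e², then every solution x with positive initial condition satisfies lim_{t→∞} x(t) = K, where K = (1/a)·ln(p/δ) is the positive equilibrium. -/
/-!
Solutions stay positive and bounded, and the delayed term `∫ f(x) dμ_u` lies between the extreme
values of `f(y) = y e^{-ay}` on the recent past `x([h u, u])`. Comparison with the linear equations
`x' = -δ x + p B` shows that `m = liminf x` and `M = limsup x` satisfy `M ≤ c f(y)` and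
`c f(z) ≤ m` for some `y, z ∈ [m, M]`, where `c = p / δ`; a first-exit argument shows `m > 0`.
Writing `D = log z - log y`, such a pair forces `(K - D) e^D ≥ K + D` with `K = log c`, which
for `0 < K < 2` is impossible unless `D = 0` because `(2 - D) e^D < 2 + D`; hence `m = M = K / a`.
-/

open MeasureTheory Filter Set Topology Real

/-- The paper's nonlinearity is `f = (p / δ) • ricker a`. -/
noncomputable def ricker (a y : ℝ) : ℝ := y * exp (-(a * y))

theorem continuous_ricker (a : ℝ) : Continuous (ricker a) := by
  unfold ricker; fun_prop

theorem ricker_nonneg {a y : ℝ} (hy : 0 ≤ y) : 0 ≤ ricker a y := by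
  unfold ricker; positivity

theorem ricker_le {a : ℝ} (ha : 0 < a) (y : ℝ) : ricker a y ≤ (a * exp 1)⁻¹ := by
  have key : a * y * exp (-(a * y)) ≤ exp (-1) :=
    calc a * y * exp (-(a * y)) ≤ exp (a * y - 1) * exp (-(a * y)) := by
          gcongr; linarith [add_one_le_exp (a * y - 1)]
      _ = exp (-1) := by rw [← exp_add]; ring_nf
  rw [mul_inv, ← exp_neg, ← div_eq_inv_mul, le_div_iff₀' ha, ricker, ← mul_assoc]
  exact key

theorem mul_ricker_eq {a c : ℝ} (hc : 0 < c) (y : ℝ) :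
    c * ricker a y = y * exp (log c - a * y) := by
  rw [ricker, exp_sub, exp_log hc, exp_neg]; field_simp

/-- Below `ε = log c / (2a)` the map `y ↦ c * ricker a y` multiplies `y` by at least
`c e^{-aε} > 1`, while on `[ε, X]` it is at least `c ε e^{-aX}`. -/
theorem exists_lt_mul_ricker {a c : ℝ} (ha : 0 < a) (hc : 1 < c) (X : ℝ) :
    ∃ ℓ > 0, ∀ c₀ ∈ Ioc 0 ℓ, ∃ B, c₀ < c * B ∧ ∀ y ∈ Icc c₀ X, B ≤ ricker a y := by
  have hlogc := log_pos hc
  set ε := log c / (2 * a)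
  have hε : 0 < ε := by positivity
  have hcε : 1 < c * exp (-(a * ε)) := by
    have haε : a * ε = log c / 2 := by simp only [ε]; field_simp
    rw [← exp_log (zero_lt_one.trans hc), ← exp_add, one_lt_exp_iff]
    linarith
  refine ⟨c * (ε * exp (-(a * X))) / 2, by positivity, fun c₀ hc₀ =>
    ⟨min (exp (-(a * ε)) * c₀) (ε * exp (-(a * X))), ?_, fun y hy => ?_⟩⟩
  · rw [mul_min_of_nonneg _ _ (zero_le_one.trans hc.le)]
    refine lt_min ?_ ?_
    · nlinarith [hc₀.1]
    · linarith [hc₀.2, show 0 < c * (ε * exp (-(a * X))) by positivity]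
  have hy0 : 0 ≤ y := hc₀.1.le.trans hy.1
  rw [ricker, mul_comm y]
  rcases le_total y ε with hyε | hεy
  · refine (min_le_left _ _).trans (mul_le_mul (exp_le_exp.2 ?_) hy.1 hc₀.1.le (exp_pos _).le)
    nlinarith
  · refine (min_le_right _ _).trans ((mul_le_mul hεy (exp_le_exp.2 ?_) (exp_pos _).le hy0).trans_eq
      (mul_comm _ _))
    nlinarith [hy.2]

theorem two_sub_mul_exp_lt {D : ℝ} (hD : 0 < D) : (2 - D) * exp D < 2 + D := by
  let F : ℝ → ℝ := fun s => (2 + s) * exp (-s) - (2 - s)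
  have hF : ∀ s, HasDerivAt F (1 - (1 + s) * exp (-s)) s := fun s =>
    ((((hasDerivAt_id s).const_add 2).mul (hasDerivAt_neg s).exp).sub
      ((hasDerivAt_id s).const_sub 2)).congr_deriv (by simp; ring)
  have hmono : StrictMonoOn F (Ici 0) := by
    refine strictMonoOn_of_deriv_pos (convex_Ici 0)
      (fun s _ => (hF s).continuousAt.continuousWithinAt) fun s hs => ?_
    rw [interior_Ici, mem_Ioi] at hs
    rw [(hF s).deriv, sub_pos, exp_neg, ← div_eq_mul_inv, div_lt_one (exp_pos s)]
    linarith [add_one_lt_exp hs.ne']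
  have hFD : 0 < F D := by simpa [F] using hmono (mem_Ici.2 le_rfl) hD.le hD
  have hexp : exp (-D) * exp D = 1 := by rw [← exp_add, neg_add_cancel, exp_zero]
  nlinarith [exp_pos D]

theorem sub_mul_exp_lt_add {D K : ℝ} (hD : 0 < D) (hK : K < 2) :
    (K - D) * exp D < K + D := by
  have := two_sub_mul_exp_lt hD
  have := add_one_lt_exp hD.ne'
  nlinarith [mul_pos (sub_pos.2 hK) (by linarith : 0 < exp D - 1)]

theorem log_mul_ricker_one {c y : ℝ} (hc : 0 < c) (hy : 0 < y) :
    log (c * ricker 1 y) = log c + log y - y := by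
  rw [ricker, log_mul hc.ne' (by positivity), log_mul hy.ne' (exp_pos _).ne', log_exp]; ring

/-- For `log c < 2` the Ricker map `u ↦ c u e^{-u}` has no 2-cycle, not even in this weak form. -/
theorem eq_of_le_mul_ricker_of_mul_ricker_le {c u v : ℝ} (hc : 0 < c) (hc2 : log c < 2)
    (hu : 0 < u) (huv : u ≤ v) (hv : v ≤ c * ricker 1 u) (hu' : c * ricker 1 v ≤ u) : u = v := by
  have hv0 : 0 < v := hu.trans_le huv
  set D := log v - log u
  have hup : u + D ≤ log c := by
    have := log_le_log hv0 hv; rw [log_mul_ricker_one hc hu] at this; linarith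
  have hlow : log c + D ≤ v := by
    have := log_le_log (by unfold ricker; positivity) hu'
    rw [log_mul_ricker_one hc hv0] at this; linarith
  by_contra hne
  have hD : 0 < D := sub_pos.2 (log_lt_log hu (huv.lt_of_ne hne))
  have hveq : v = u * exp D := by rw [exp_sub, exp_log hv0, exp_log hu]; field_simp
  have := sub_mul_exp_lt_add hD hc2
  have : u * exp D ≤ (log c - D) * exp D := by gcongr; linarith
  linarith

theorem eq_log_div_of_le_mul_ricker {a c m M y z : ℝ} (ha : 0 < a) (hc : 0 < c)
    (hc2 : log c < 2) (hm : 0 < m) (hy : y ∈ Icc m M) (hz : z ∈ Icc m M)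
    (hMy : M ≤ c * ricker a y) (hzm : c * ricker a z ≤ m) :
    m = log c / a ∧ M = log c / a := by
  have hy0 : 0 < y := hm.trans_le hy.1
  have hz0 : 0 < z := hm.trans_le hz.1
  have hyK : a * y ≤ log c := by
    have : y * 1 ≤ y * exp (log c - a * y) := by
      rw [mul_one, ← mul_ricker_eq hc]; exact hy.2.trans hMy
    linarith [one_le_exp_iff.1 (le_of_mul_le_mul_left this hy0)]
  have hzK : log c ≤ a * z := by
    have : z * exp (log c - a * z) ≤ z * 1 := by
      rw [mul_one, ← mul_ricker_eq hc]; exact hzm.trans hz.1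
    linarith [exp_le_one_iff.1 (le_of_mul_le_mul_left this hz0)]
  have hscale : ∀ w, c * ricker 1 (a * w) = a * (c * ricker a w) := fun w => by
    simp only [ricker, one_mul]; ring
  have hyz : a * y = a * z :=
    eq_of_le_mul_ricker_of_mul_ricker_le hc hc2 (by positivity) (hyK.trans hzK)
    (by rw [hscale]; exact mul_le_mul_of_nonneg_left (hz.2.trans hMy) ha.le)
    (by rw [hscale]; exact mul_le_mul_of_nonneg_left (hzm.trans hy.1) ha.le)
  have hyv : y = log c / a := by rw [eq_div_iff ha.ne']; linarith
  have hzv : z = log c / a := by rw [eq_div_iff ha.ne']; linarith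
  have hfix : ∀ w, w = log c / a → c * ricker a w = w := fun w hw => by
    rw [mul_ricker_eq hc, hw, mul_div_cancel₀ _ ha.ne', sub_self, exp_zero, mul_one]
  have hyf := hfix y hyv
  have hzf := hfix z hzv
  constructor <;> linarith [hy.1, hy.2, hz.1, hz.2]

theorem frequently_slope_lt_of_sub_le_integral {x g : ℝ → ℝ} {t b r : ℝ} (hg : Continuous g)
    (htb : t < b) (hx : ∀ z ∈ Ioc t b, x z - x t ≤ ∫ u in t..z, g u) (hr : g t < r) :
    ∃ᶠ z in 𝓝[>] t, slope x t z < r := by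
  have hψ : HasDerivAt (fun z => ∫ u in t..z, g u) (g t) t :=
    intervalIntegral.integral_hasDerivAt_right (hg.intervalIntegrable _ _)
      hg.aestronglyMeasurable.stronglyMeasurableAtFilter hg.continuousAt
  have hslope : ∀ᶠ z in 𝓝[>] t, slope (fun z => ∫ u in t..z, g u) t z < r :=
    ((hasDerivAt_iff_tendsto_slope.1 hψ).mono_left
      (nhdsWithin_mono t fun _ hz => ne_of_gt hz)).eventually_lt_const hr
  refine ((hslope.and (Ioo_mem_nhdsGT htb)).mono fun z ⟨hz, hzt, hzb⟩ => ?_).frequently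
  refine lt_of_le_of_lt ?_ hz
  rw [slope_def_field, slope_def_field, intervalIntegral.integral_same, sub_zero]
  exact div_le_div_of_nonneg_right (hx z ⟨hzt, hzb.le⟩) (sub_nonneg.2 hzt.le)

/-- Unlike in `le_gronwallBound_of_liminf_deriv_right_le`, the bound is `K x + ε` rather than
`K ‖x‖ + ε`, so that `K` may be negative. -/
theorem le_gronwallBound_of_sub_le_integral {x : ℝ → ℝ} {K ε v b : ℝ} (hx : Continuous x)
    (hvb : v ≤ b)
    (h : ∀ s t, v ≤ s → s ≤ t → t ≤ b → x t - x s ≤ ∫ u in s..t, (K * x u + ε)) :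
    x b ≤ gronwallBound (x v) K ε (b - v) := by
  have hη : ∀ η > 0, x b ≤ gronwallBound (x v) K (ε + η) (b - v) := fun η hη =>
    image_le_of_liminf_slope_right_lt_deriv_boundary' hx.continuousOn
      (fun t ht r hr => frequently_slope_lt_of_sub_le_integral (by fun_prop) ht.2
        (fun z hz => h t z ht.1 hz.1.le hz.2) hr)
      (by rw [sub_self, gronwallBound_x0])
      (fun t _ => (hasDerivAt_gronwallBound_shift _ _ _ t v).continuousAt.continuousWithinAt)
      (fun t _ => (hasDerivAt_gronwallBound_shift _ _ _ t v).hasDerivWithinAt)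
      (fun t _ hxt => by rw [hxt]; linarith)
      ⟨hvb, le_rfl⟩
  have hlim : Tendsto (fun η => gronwallBound (x v) K (ε + η) (b - v)) (𝓝[>] 0)
      (𝓝 (gronwallBound (x v) K ε (b - v))) := by
    have := ((gronwallBound_continuous_ε (x v) K (b - v)).comp
      (continuous_const_add ε)).tendsto 0
    simpa [Function.comp_def] using this.mono_left nhdsWithin_le_nhds
  exact ge_of_tendsto hlim (eventually_nhdsWithin_of_forall hη)

theorem gronwallBound_neg (x₀ K ε s : ℝ) :
    gronwallBound (-x₀) K (-ε) s = -gronwallBound x₀ K ε s := by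
  unfold gronwallBound; split_ifs <;> ring

theorem gronwallBound_le_of_integral_le_sub {x : ℝ → ℝ} {K ε v b : ℝ} (hx : Continuous x)
    (hvb : v ≤ b)
    (h : ∀ s t, v ≤ s → s ≤ t → t ≤ b → ∫ u in s..t, (K * x u + ε) ≤ x t - x s) :
    gronwallBound (x v) K ε (b - v) ≤ x b := by
  have := le_gronwallBound_of_sub_le_integral (x := fun t => -x t) (K := K) (ε := -ε) hx.neg hvb
    fun s t hs hst htb => by
      have hneg : ∫ u in s..t, (K * -x u + -ε) = -∫ u in s..t, (K * x u + ε) := by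
        rw [← intervalIntegral.integral_neg]; congr 1; ext u; ring
      rw [hneg]; linarith [h s t hs hst htb]
  rw [gronwallBound_neg] at this
  linarith

theorem gronwallBound_neg_eq {δ : ℝ} (hδ : δ ≠ 0) (x₀ β s : ℝ) :
    gronwallBound x₀ (-δ) β s = β / δ + (x₀ - β / δ) * exp (-(δ * s)) := by
  simp only [gronwallBound_of_K_ne_0 (neg_ne_zero.2 hδ), neg_mul]
  field_simp
  ring

theorem min_le_gronwallBound {δ s : ℝ} (hδ : 0 < δ) (hs : 0 ≤ s) (x₀ β : ℝ) :
    min x₀ (β / δ) ≤ gronwallBound x₀ (-δ) β s := by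
  have hE : exp (-(δ * s)) ≤ 1 := exp_le_one_iff.2 (by nlinarith)
  rw [gronwallBound_neg_eq hδ.ne']
  rcases le_total x₀ (β / δ) with h | h
  · rw [min_eq_left h]; nlinarith [mul_nonneg (sub_nonneg.2 hE) (sub_nonneg.2 h)]
  · rw [min_eq_right h]; nlinarith [exp_pos (-(δ * s))]

theorem gronwallBound_le_max {δ s : ℝ} (hδ : 0 < δ) (hs : 0 ≤ s) (x₀ β : ℝ) :
    gronwallBound x₀ (-δ) β s ≤ max x₀ (β / δ) := by
  have hE : exp (-(δ * s)) ≤ 1 := exp_le_one_iff.2 (by nlinarith)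
  rw [gronwallBound_neg_eq hδ.ne']
  rcases le_total x₀ (β / δ) with h | h
  · rw [max_eq_right h]; nlinarith [exp_pos (-(δ * s))]
  · rw [max_eq_left h]; nlinarith [mul_nonneg (sub_nonneg.2 hE) (sub_nonneg.2 h)]

theorem tendsto_gronwallBound_atTop {δ : ℝ} (hδ : 0 < δ) (x₀ β T : ℝ) :
    Tendsto (fun t => gronwallBound x₀ (-δ) β (t - T)) atTop (𝓝 (β / δ)) := by
  simp only [gronwallBound_neg_eq hδ.ne']
  have hexp : Tendsto (fun t => exp (-(δ * (t - T)))) atTop (𝓝 0) :=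
    tendsto_exp_neg_atTop_nhds_zero.comp
      ((tendsto_atTop_add_const_right atTop (-T) tendsto_id).const_mul_atTop hδ)
  simpa using (hexp.const_mul (x₀ - β / δ)).const_add (β / δ)

theorem forall_lt_of_forall_Icc_le_imp_lt {x : ℝ → ℝ} (hx : Continuous x) {T c : ℝ}
    (hT : c < x T) (h : ∀ t > T, (∀ s ∈ Icc T t, c ≤ x s) → c < x t) : ∀ t ≥ T, c < x t := by
  by_contra! hne
  obtain ⟨t₁, ht₁T, ht₁⟩ := hne
  let S := Ici T ∩ x ⁻¹' Iic c
  have hbdd : BddBelow S := ⟨T, fun _ hs => hs.1⟩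
  have hτ : sInf S ∈ S :=
    (isClosed_Ici.inter (isClosed_Iic.preimage hx)).csInf_mem ⟨t₁, ht₁T, ht₁⟩ hbdd
  have hlt : ∀ s ∈ Ico T (sInf S), c < x s := fun s hs =>
    not_le.1 fun hsc => (csInf_le hbdd ⟨hs.1, hsc⟩).not_gt hs.2
  have hτT : T < sInf S := hτ.1.lt_of_ne (by rintro h; exact (hτ.2 : x _ ≤ c).not_gt (h ▸ hT))
  have hle : closure (Ico T (sInf S)) ⊆ {s | c ≤ x s} :=
    (isClosed_le continuous_const hx).closure_subset_iff.2 fun s hs => (hlt s hs).le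
  rw [closure_Ico hτT.ne] at hle
  exact (h _ hτT hle).not_ge hτ.2

theorem eventually_mem_Icc_liminf_sub_limsup_add {α : Type*} {f : Filter α} {u : α → ℝ}
    (hab : IsBoundedUnder (· ≤ ·) f u) (hbe : IsBoundedUnder (· ≥ ·) f u) {e : ℝ} (he : 0 < e) :
    ∀ᶠ s in f, u s ∈ Icc (liminf u f - e) (limsup u f + e) :=
  ((eventually_lt_of_lt_liminf (by linarith) hbe).and
    (eventually_lt_of_limsup_lt (by linarith) hab)).mono fun _ hs => ⟨hs.1.le, hs.2.le⟩

theorem exists_mem_Icc_le_of_forall_pos {g : ℝ → ℝ} (hg : Continuous g) {m M C : ℝ}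
    (hmM : m ≤ M) (h : ∀ e > 0, ∃ y ∈ Icc (m - e) (M + e), C ≤ g y) :
    ∃ y ∈ Icc m M, C ≤ g y := by
  by_contra! hlt
  obtain ⟨ε, hε, hsub⟩ :=
    isCompact_Icc.exists_thickening_subset_open (isOpen_lt hg continuous_const) hlt
  obtain ⟨y, ⟨hy₁, hy₂⟩, hCy⟩ := h (ε / 2) (half_pos hε)
  refine (hsub ?_ : g y < C).not_ge hCy
  rcases lt_or_ge y m with hym | hmy
  · exact Metric.ball_subset_thickening (left_mem_Icc.2 hmM) ε
      (by rw [Real.ball_eq_Ioo]; constructor <;> linarith)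
  rcases le_or_gt y M with hyM | hMy
  · exact Metric.self_subset_thickening hε _ ⟨hmy, hyM⟩
  · exact Metric.ball_subset_thickening (right_mem_Icc.2 hmM) ε
      (by rw [Real.ball_eq_Ioo]; constructor <;> linarith)

theorem integral_le_of_forall_mem_le {α : Type*} [TopologicalSpace α] [T2Space α]
    [MeasurableSpace α] [OpensMeasurableSpace α] {μ : Measure α} [IsProbabilityMeasure μ]
    {g : α → ℝ} {K : Set α} {B : ℝ} (hK : IsCompact K) (hμK : μ Kᶜ = 0)
    (hg : ContinuousOn g K) (hB : ∀ s ∈ K, g s ≤ B) : ∫ s, g s ∂μ ≤ B := by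
  have hae : ∀ᵐ s ∂μ, s ∈ K := mem_ae_iff.2 hμK
  have hint : Integrable g μ := by
    rw [← Measure.restrict_eq_self_of_ae_mem hae]; exact hg.integrableOn_compact hK
  calc ∫ s, g s ∂μ ≤ ∫ _, B ∂μ := integral_mono_ae hint (integrable_const B) (hae.mono hB)
    _ = B := by simp

theorem le_integral_of_forall_mem_le {α : Type*} [TopologicalSpace α] [T2Space α]
    [MeasurableSpace α] [OpensMeasurableSpace α] {μ : Measure α} [IsProbabilityMeasure μ]
    {g : α → ℝ} {K : Set α} {B : ℝ} (hK : IsCompact K) (hμK : μ Kᶜ = 0)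
    (hg : ContinuousOn g K) (hB : ∀ s ∈ K, B ≤ g s) : B ≤ ∫ s, g s ∂μ := by
  have := integral_le_of_forall_mem_le (g := fun s => -g s) hK hμK hg.neg
    fun s hs => neg_le_neg (hB s hs)
  rw [integral_neg] at this
  linarith

/-- Hypothesis (a4) on the delay distributions. -/
structure IsDelayKernel (h : ℝ → ℝ) (μ : ℝ → Measure ℝ) : Prop where
  isProbabilityMeasure : ∀ t, 0 ≤ t → IsProbabilityMeasure (μ t)
  measure_compl_Icc : ∀ t, 0 ≤ t → μ t (Icc (h t) t)ᶜ = 0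
  measurable_integral : ∀ g : ℝ → ℝ, Measurable g → (∃ C, ∀ y, |g y| ≤ C) →
    Measurable fun t => ∫ s, g s ∂μ t

namespace IsDelayKernel

variable {h : ℝ → ℝ} {μ : ℝ → Measure ℝ} {g : ℝ → ℝ} {t B : ℝ}

theorem integral_le (hμ : IsDelayKernel h μ) (ht : 0 ≤ t) (hg : Continuous g)
    (hB : ∀ s ∈ Icc (h t) t, g s ≤ B) : ∫ s, g s ∂μ t ≤ B :=
  haveI := hμ.isProbabilityMeasure t ht
  integral_le_of_forall_mem_le isCompact_Icc (hμ.measure_compl_Icc t ht) hg.continuousOn hB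

theorem le_integral (hμ : IsDelayKernel h μ) (ht : 0 ≤ t) (hg : Continuous g)
    (hB : ∀ s ∈ Icc (h t) t, B ≤ g s) : B ≤ ∫ s, g s ∂μ t :=
  haveI := hμ.isProbabilityMeasure t ht
  le_integral_of_forall_mem_le isCompact_Icc (hμ.measure_compl_Icc t ht) hg.continuousOn hB

/-- Only the values of `g` on `(-∞, max s t]` matter on `[s, t]`, so truncating `g` there gives
a bounded measurable function to which `measurable_integral` applies. -/
theorem intervalIntegrable_integral (hμ : IsDelayKernel h μ) (hg : Continuous g)
    (hbdd : ∀ T, ∃ C, ∀ s ≤ T, |g s| ≤ C) {s t : ℝ} (hs : 0 ≤ s) (ht : 0 ≤ t) :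
    IntervalIntegrable (fun u => ∫ y, g y ∂μ u) volume s t := by
  obtain ⟨C, hC⟩ := hbdd (max s t)
  let gT := (Iic (max s t)).indicator g
  have hgT : ∀ y, |gT y| ≤ C := fun y => by
    by_cases hy : y ∈ Iic (max s t)
    · simpa [gT, hy] using hC y hy
    · simpa [gT, hy] using (abs_nonneg _).trans (hC _ le_rfl)
  have hpos : ∀ u ∈ uIoc s t, 0 ≤ u := fun u hu => (le_min hs ht).trans hu.1.le
  have heq : EqOn (fun u => ∫ y, gT y ∂μ u) (fun u => ∫ y, g y ∂μ u) (uIoc s t) := fun u hu => by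
    have hae : ∀ᵐ y ∂μ u, y ∈ Icc (h u) u := mem_ae_iff.2 (hμ.measure_compl_Icc u (hpos u hu))
    exact integral_congr_ae (hae.mono fun y hy =>
      indicator_of_mem (show y ∈ Iic (max s t) from hy.2.trans hu.2) g)
  rw [intervalIntegrable_iff]
  refine IntegrableOn.congr_fun ?_ heq measurableSet_uIoc
  refine Measure.integrableOn_of_bounded (M := C) measure_Ioc_lt_top.ne
    (hμ.measurable_integral gT (hg.measurable.indicator measurableSet_Iic)
      ⟨C, hgT⟩).aestronglyMeasurable ?_
  refine ae_restrict_of_forall_mem measurableSet_uIoc fun u hu => ?_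
  have := hμ.isProbabilityMeasure u (hpos u hu)
  simpa using norm_integral_le_of_norm_le_const (μ := μ u)
    (Eventually.of_forall fun y => (Real.norm_eq_abs _).trans_le (hgT y))

end IsDelayKernel

structure IsNicholsonSolution (δ p a : ℝ) (μ : ℝ → Measure ℝ) (x : ℝ → ℝ) : Prop where
  continuous : Continuous x
  nonneg_of_nonpos : ∀ t ≤ 0, 0 ≤ x t
  eq_add_integral : ∀ t, 0 ≤ t →
    x t = x 0 + ∫ u in (0 : ℝ)..t, (-(δ * x u) + p * ∫ s, ricker a (x s) ∂μ u)

namespace IsNicholsonSolution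

variable {δ p a : ℝ} {h : ℝ → ℝ} {μ : ℝ → Measure ℝ} {x : ℝ → ℝ}

theorem continuous_ricker_comp (hx : IsNicholsonSolution δ p a μ x) :
    Continuous fun s => ricker a (x s) :=
  (continuous_ricker a).comp hx.continuous

theorem exists_abs_ricker_le (hx : IsNicholsonSolution δ p a μ x) (ha : 0 < a) (T : ℝ) :
    ∃ C, ∀ s ≤ T, |ricker a (x s)| ≤ C := by
  obtain ⟨C, hC⟩ := (isCompact_Icc (a := 0) (b := T)).exists_bound_of_continuousOn
    hx.continuous_ricker_comp.continuousOn
  refine ⟨max C (a * exp 1)⁻¹, fun s hs => ?_⟩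
  rcases le_or_gt s 0 with hs0 | hs0
  · rw [abs_of_nonneg (ricker_nonneg (hx.nonneg_of_nonpos s hs0))]
    exact (ricker_le ha _).trans (le_max_right _ _)
  · exact (hC s ⟨hs0.le, hs⟩).trans (le_max_left _ _)

theorem intervalIntegrable_rhs (hμ : IsDelayKernel h μ) (hx : IsNicholsonSolution δ p a μ x)
    (ha : 0 < a) {s t : ℝ} (hs : 0 ≤ s) (ht : 0 ≤ t) :
    IntervalIntegrable (fun u => -(δ * x u) + p * ∫ y, ricker a (x y) ∂μ u) volume s t :=
  ((hx.continuous.const_mul δ).neg.intervalIntegrable s t).add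
    ((hμ.intervalIntegrable_integral hx.continuous_ricker_comp (hx.exists_abs_ricker_le ha)
      hs ht).const_mul p)

theorem sub_eq_integral (hμ : IsDelayKernel h μ) (hx : IsNicholsonSolution δ p a μ x)
    (ha : 0 < a) {s t : ℝ} (hs : 0 ≤ s) (hst : s ≤ t) :
    x t - x s = ∫ u in s..t, (-(δ * x u) + p * ∫ y, ricker a (x y) ∂μ u) := by
  rw [hx.eq_add_integral t (hs.trans hst), hx.eq_add_integral s hs,
    ← intervalIntegral.integral_add_adjacent_intervals (hx.intervalIntegrable_rhs hμ ha le_rfl hs)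
      (hx.intervalIntegrable_rhs hμ ha hs (hs.trans hst))]
  ring

theorem le_gronwallBound (hμ : IsDelayKernel h μ) (hx : IsNicholsonSolution δ p a μ x)
    (ha : 0 < a) (hp : 0 ≤ p) {v b B : ℝ} (hv : 0 ≤ v) (hvb : v ≤ b)
    (hB : ∀ u ∈ Icc v b, ∀ s ∈ Icc (h u) u, ricker a (x s) ≤ B) :
    x b ≤ gronwallBound (x v) (-δ) (p * B) (b - v) := by
  refine le_gronwallBound_of_sub_le_integral hx.continuous hvb fun s t hvs hst htb => ?_
  rw [hx.sub_eq_integral hμ ha (hv.trans hvs) hst]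
  refine intervalIntegral.integral_mono_on hst
    (hx.intervalIntegrable_rhs hμ ha (hv.trans hvs) (hv.trans (hvs.trans hst)))
    (((hx.continuous.const_mul _).add continuous_const).intervalIntegrable _ _) fun u hu => ?_
  have := hμ.integral_le (hv.trans (hvs.trans hu.1)) hx.continuous_ricker_comp
    (hB u ⟨hvs.trans hu.1, hu.2.trans htb⟩)
  nlinarith

theorem gronwallBound_le (hμ : IsDelayKernel h μ) (hx : IsNicholsonSolution δ p a μ x)
    (ha : 0 < a) (hp : 0 ≤ p) {v b B : ℝ} (hv : 0 ≤ v) (hvb : v ≤ b)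
    (hB : ∀ u ∈ Icc v b, ∀ s ∈ Icc (h u) u, B ≤ ricker a (x s)) :
    gronwallBound (x v) (-δ) (p * B) (b - v) ≤ x b := by
  refine gronwallBound_le_of_integral_le_sub hx.continuous hvb fun s t hvs hst htb => ?_
  rw [hx.sub_eq_integral hμ ha (hv.trans hvs) hst]
  refine intervalIntegral.integral_mono_on hst
    (((hx.continuous.const_mul _).add continuous_const).intervalIntegrable _ _)
    (hx.intervalIntegrable_rhs hμ ha (hv.trans hvs) (hv.trans (hvs.trans hst))) fun u hu => ?_
  have := hμ.le_integral (hv.trans (hvs.trans hu.1)) hx.continuous_ricker_comp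
    (hB u ⟨hvs.trans hu.1, hu.2.trans htb⟩)
  nlinarith

theorem pos (hμ : IsDelayKernel h μ) (hx : IsNicholsonSolution δ p a μ x) (ha : 0 < a)
    (hp : 0 ≤ p) (h0 : 0 < x 0) : ∀ t ≥ 0, 0 < x t := by
  refine forall_lt_of_forall_Icc_le_imp_lt hx.continuous h0 fun t ht hle => ?_
  have hnonneg : ∀ s ≤ t, 0 ≤ x s := fun s hs =>
    (le_or_gt s 0).elim (hx.nonneg_of_nonpos s) fun hs0 => hle s ⟨hs0.le, hs⟩
  calc 0 < gronwallBound (x 0) (-δ) (p * 0) (t - 0) := by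
        rw [mul_zero, gronwallBound_ε0]; positivity
    _ ≤ x t := hx.gronwallBound_le hμ ha hp le_rfl ht.le fun u hu s hs =>
        ricker_nonneg (hnonneg s (hs.2.trans hu.2))

theorem le_max (hμ : IsDelayKernel h μ) (hx : IsNicholsonSolution δ p a μ x) (hδ : 0 < δ)
    (ha : 0 < a) (hp : 0 ≤ p) : ∀ t ≥ 0, x t ≤ max (x 0) (p * (a * exp 1)⁻¹ / δ) := fun _ ht =>
  (hx.le_gronwallBound hμ ha hp le_rfl ht fun _ _ s _ => ricker_le ha (x s)).trans
    (gronwallBound_le_max hδ (sub_nonneg.2 ht) _ _)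

theorem exists_pos_eventually_lt (hμ : IsDelayKernel h μ) (hx : IsNicholsonSolution δ p a μ x)
    (hh : Tendsto h atTop atTop) (hδ : 0 < δ) (ha : 0 < a) (hδp : δ < p) (h0 : 0 < x 0) :
    ∃ c₀ > 0, ∀ᶠ t in atTop, c₀ < x t := by
  have hp : 0 ≤ p := (hδ.trans hδp).le
  obtain ⟨ℓ, hℓ, hB⟩ := exists_lt_mul_ricker ha ((one_lt_div hδ).2 hδp)
    (max (x 0) (p * (a * exp 1)⁻¹ / δ))
  obtain ⟨T, hT⟩ := eventually_atTop.1 ((hh.eventually_ge_atTop 0).and (eventually_ge_atTop 0))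
  have hT0 : 0 ≤ T := (hT T le_rfl).2
  obtain ⟨s₀, hs₀, hmin⟩ :=
    isCompact_Icc.exists_isMinOn (nonempty_Icc.2 hT0) hx.continuous.continuousOn
  have hxs₀ := hx.pos hμ ha hp h0 s₀ hs₀.1
  set c₀ := min ℓ (x s₀ / 2)
  have hlt : ∀ s ∈ Icc 0 T, c₀ < x s := fun s hs =>
    (min_le_right _ _).trans_lt ((half_lt_self hxs₀).trans_le (hmin hs))
  obtain ⟨B, hcB, hBle⟩ := hB c₀ ⟨lt_min hℓ (half_pos hxs₀), min_le_left _ _⟩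
  refine ⟨c₀, lt_min hℓ (half_pos hxs₀), eventually_atTop.2 ⟨T,
    forall_lt_of_forall_Icc_le_imp_lt hx.continuous (hlt T ⟨hT0, le_rfl⟩) fun t hTt hle => ?_⟩⟩
  have hbound : ∀ u ∈ Icc T t, ∀ s ∈ Icc (h u) u, B ≤ ricker a (x s) := fun u hu s hs => by
    have hs0 : 0 ≤ s := (hT u hu.1).1.trans hs.1
    refine hBle (x s) ⟨?_, hx.le_max hμ hδ ha hp s hs0⟩
    rcases le_total s T with hsT | hTs
    · exact (hlt s ⟨hs0, hsT⟩).le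
    · exact hle s ⟨hTs, hs.2.trans hu.2⟩
  calc c₀ < min (x T) (p * B / δ) := lt_min (hlt T ⟨hT0, le_rfl⟩) (by rwa [mul_div_right_comm])
    _ ≤ gronwallBound (x T) (-δ) (p * B) (t - T) :=
        min_le_gronwallBound hδ (sub_nonneg.2 hTt.le) _ _
    _ ≤ x t := hx.gronwallBound_le hμ ha hp hT0 hTt.le hbound

theorem limsup_le (hμ : IsDelayKernel h μ) (hx : IsNicholsonSolution δ p a μ x)
    (hh : Tendsto h atTop atTop) (hδ : 0 < δ) (ha : 0 < a) (hp : 0 ≤ p)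
    (hbdd : IsBoundedUnder (· ≥ ·) atTop x) {B : ℝ} (hB : ∀ᶠ s in atTop, ricker a (x s) ≤ B) :
    limsup x atTop ≤ p * B / δ := by
  obtain ⟨T₁, hT₁⟩ := eventually_atTop.1 hB
  obtain ⟨T, hT⟩ := eventually_atTop.1 ((hh.eventually_ge_atTop T₁).and (eventually_ge_atTop 0))
  have hup : ∀ᶠ t in atTop, x t ≤ gronwallBound (x T) (-δ) (p * B) (t - T) :=
    eventually_atTop.2 ⟨T, fun t ht => hx.le_gronwallBound hμ ha hp (hT T le_rfl).2 ht
      fun u hu s hs => hT₁ s ((hT u hu.1).1.trans hs.1)⟩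
  have hlim := tendsto_gronwallBound_atTop hδ (x T) (p * B) T
  exact (limsup_le_limsup hup hbdd.isCoboundedUnder_le hlim.isBoundedUnder_le).trans_eq
    hlim.limsup_eq

theorem le_liminf (hμ : IsDelayKernel h μ) (hx : IsNicholsonSolution δ p a μ x)
    (hh : Tendsto h atTop atTop) (hδ : 0 < δ) (ha : 0 < a) (hp : 0 ≤ p)
    (hbdd : IsBoundedUnder (· ≤ ·) atTop x) {B : ℝ} (hB : ∀ᶠ s in atTop, B ≤ ricker a (x s)) :
    p * B / δ ≤ liminf x atTop := by
  obtain ⟨T₁, hT₁⟩ := eventually_atTop.1 hB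
  obtain ⟨T, hT⟩ := eventually_atTop.1 ((hh.eventually_ge_atTop T₁).and (eventually_ge_atTop 0))
  have hlow : ∀ᶠ t in atTop, gronwallBound (x T) (-δ) (p * B) (t - T) ≤ x t :=
    eventually_atTop.2 ⟨T, fun t ht => hx.gronwallBound_le hμ ha hp (hT T le_rfl).2 ht
      fun u hu s hs => hT₁ s ((hT u hu.1).1.trans hs.1)⟩
  have hlim := tendsto_gronwallBound_atTop hδ (x T) (p * B) T
  exact hlim.liminf_eq.symm.trans_le
    (liminf_le_liminf hlow hlim.isBoundedUnder_ge hbdd.isCoboundedUnder_ge)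

theorem exists_limsup_le_mul_ricker (hμ : IsDelayKernel h μ)
    (hx : IsNicholsonSolution δ p a μ x) (hh : Tendsto h atTop atTop) (hδ : 0 < δ) (ha : 0 < a)
    (hp : 0 ≤ p) (hbdd_above : IsBoundedUnder (· ≤ ·) atTop x)
    (hbdd_below : IsBoundedUnder (· ≥ ·) atTop x) :
    ∃ y ∈ Icc (liminf x atTop) (limsup x atTop), limsup x atTop ≤ p / δ * ricker a y := by
  have hmM := liminf_le_limsup hbdd_above hbdd_below
  refine exists_mem_Icc_le_of_forall_pos ((continuous_ricker a).const_mul _) hmM fun e he => ?_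
  obtain ⟨y, hy, hmax⟩ := (isCompact_Icc (a := liminf x atTop - e)
    (b := limsup x atTop + e)).exists_isMaxOn (nonempty_Icc.2 (by linarith))
    (continuous_ricker a).continuousOn
  refine ⟨y, hy, ?_⟩
  rw [div_mul_eq_mul_div]
  exact hx.limsup_le hμ hh hδ ha hp hbdd_below
    ((eventually_mem_Icc_liminf_sub_limsup_add hbdd_above hbdd_below he).mono fun s hs => hmax hs)

theorem exists_mul_ricker_le_liminf (hμ : IsDelayKernel h μ)
    (hx : IsNicholsonSolution δ p a μ x) (hh : Tendsto h atTop atTop) (hδ : 0 < δ) (ha : 0 < a)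
    (hp : 0 ≤ p) (hbdd_above : IsBoundedUnder (· ≤ ·) atTop x)
    (hbdd_below : IsBoundedUnder (· ≥ ·) atTop x) :
    ∃ z ∈ Icc (liminf x atTop) (limsup x atTop), p / δ * ricker a z ≤ liminf x atTop := by
  have hmM := liminf_le_limsup hbdd_above hbdd_below
  obtain ⟨z, hz, hzm⟩ := exists_mem_Icc_le_of_forall_pos (C := -liminf x atTop)
    ((continuous_ricker a).const_mul (p / δ)).neg hmM fun e he => by
      obtain ⟨z, hz, hmin⟩ := (isCompact_Icc (a := liminf x atTop - e)
        (b := limsup x atTop + e)).exists_isMinOn (nonempty_Icc.2 (by linarith))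
        (continuous_ricker a).continuousOn
      refine ⟨z, hz, ?_⟩
      have := hx.le_liminf hμ hh hδ ha hp hbdd_above
        ((eventually_mem_Icc_liminf_sub_limsup_add hbdd_above hbdd_below he).mono
          fun s hs => hmin hs)
      rw [← div_mul_eq_mul_div] at this
      simpa using this
  exact ⟨z, hz, by simpa using hzm⟩

theorem tendsto_log_div (hμ : IsDelayKernel h μ) (hx : IsNicholsonSolution δ p a μ x)
    (hh : Tendsto h atTop atTop) (hδ : 0 < δ) (ha : 0 < a) (h0 : 0 < x 0) (hδp : δ < p)
    (hpe : p < δ * exp 2) : Tendsto x atTop (𝓝 (log (p / δ) / a)) := by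
  have hp : 0 ≤ p := (hδ.trans hδp).le
  have hbdd_above : IsBoundedUnder (· ≤ ·) atTop x :=
    isBoundedUnder_of_eventually_le (eventually_atTop.2 ⟨0, hx.le_max hμ hδ ha hp⟩)
  have hbdd_below : IsBoundedUnder (· ≥ ·) atTop x :=
    isBoundedUnder_of_eventually_ge
      (eventually_atTop.2 ⟨0, fun t ht => (hx.pos hμ ha hp h0 t ht).le⟩)
  obtain ⟨c₀, hc₀, hev⟩ := hx.exists_pos_eventually_lt hμ hh hδ ha hδp h0
  have hm : 0 < liminf x atTop :=
    hc₀.trans_le (le_liminf_of_le hbdd_above.isCoboundedUnder_ge (hev.mono fun _ => le_of_lt))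
  obtain ⟨y, hy, hMy⟩ := hx.exists_limsup_le_mul_ricker hμ hh hδ ha hp hbdd_above hbdd_below
  obtain ⟨z, hz, hzm⟩ := hx.exists_mul_ricker_le_liminf hμ hh hδ ha hp hbdd_above hbdd_below
  have hc : 0 < p / δ := div_pos (hδ.trans hδp) hδ
  have hc2 : log (p / δ) < 2 := by
    rw [log_lt_iff_lt_exp hc, div_lt_iff₀ hδ]; linarith
  obtain ⟨hm_eq, hM_eq⟩ := eq_log_div_of_le_mul_ricker ha hc hc2 hm hy hz hMy hzm
  exact tendsto_of_liminf_eq_limsup hm_eq hM_eq hbdd_above hbdd_below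

end IsNicholsonSolution

theorem nicholson_global_stability_general
    (δ p a : ℝ) (hδ : 0 < δ) (ha : 0 < a)
    (h : ℝ → ℝ) (μ : ℝ → Measure ℝ) (φ : ℝ → ℝ)
    (hh_tend : Tendsto h atTop atTop)
    (hμ_prob : ∀ t : ℝ, 0 ≤ t → IsProbabilityMeasure (μ t))
    (hμ_supp : ∀ t : ℝ, 0 ≤ t → μ t (Icc (h t) t)ᶜ = 0)
    (hμ_meas : ∀ g : ℝ → ℝ, Measurable g → (∃ C : ℝ, ∀ y : ℝ, |g y| ≤ C) →
      Measurable (fun t => ∫ s, g s ∂(μ t)))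
    (hφ_nonneg : ∀ t : ℝ, t ≤ 0 → 0 ≤ φ t)
    (hφ_pos : 0 < φ 0)
    (x : ℝ → ℝ)
    (hx_cont : Continuous x)
    (hx_init : ∀ t : ℝ, t ≤ 0 → x t = φ t)
    (hx_sol : ∀ t : ℝ, 0 ≤ t →
      x t = φ 0 + ∫ u in (0:ℝ)..t,
        (-(δ * x u) + p * ∫ s, x s * Real.exp (-(a * x s)) ∂(μ u)))
    (hδp : δ < p) (hpe : p < δ * Real.exp 2) :
    Tendsto x atTop (nhds ((1 / a) * Real.log (p / δ))) := by
  have hx0 : x 0 = φ 0 := by simpa using hx_sol 0 le_rfl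
  have hμ : IsDelayKernel h μ := ⟨hμ_prob, hμ_supp, hμ_meas⟩
  have hx : IsNicholsonSolution δ p a μ x :=
    ⟨hx_cont, fun t ht => hx_init t ht ▸ hφ_nonneg t ht,
      fun t ht => by rw [hx0]; exact hx_sol t ht⟩
  rw [one_div_mul_eq_div]
  exact hx.tendsto_log_div hμ hh_tend hδ ha (hx0 ▸ hφ_pos) hδp hpe

theorem nicholson_global_stability
    (δ p a : ℝ) (hδ : 0 < δ) (hp : 0 < p) (ha : 0 < a)
    (h : ℝ → ℝ) (μ : ℝ → Measure ℝ) (φ : ℝ → ℝ)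
    (hh_meas : Measurable h)
    (hh_le : ∀ t : ℝ, 0 ≤ t → h t ≤ t)
    (hh_tend : Tendsto h atTop atTop)
    (hμ_prob : ∀ t : ℝ, 0 ≤ t → IsProbabilityMeasure (μ t))
    (hμ_supp : ∀ t : ℝ, 0 ≤ t → μ t (Icc (h t) t)ᶜ = 0)
    (hμ_meas : ∀ g : ℝ → ℝ, Measurable g → (∃ C : ℝ, ∀ y : ℝ, |g y| ≤ C) →
      Measurable (fun t => ∫ s, g s ∂(μ t)))
    (hφ_cont : ContinuousOn φ (Iic (0 : ℝ)))
    (hφ_bdd : ∃ C : ℝ, ∀ t : ℝ, t ≤ 0 → |φ t| ≤ C)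
    (hφ_nonneg : ∀ t : ℝ, t ≤ 0 → 0 ≤ φ t)
    (hφ_pos : 0 < φ 0)
    (x : ℝ → ℝ)
    (hx_cont : Continuous x)
    (hx_init : ∀ t : ℝ, t ≤ 0 → x t = φ t)
    (hx_sol : ∀ t : ℝ, 0 ≤ t →
      x t = φ 0 + ∫ u in (0:ℝ)..t,
        (-(δ * x u) + p * ∫ s, x s * Real.exp (-(a * x s)) ∂(μ u)))
    (hδp : δ < p) (hpe : p < δ * Real.exp 2) :
    Tendsto x atTop (nhds ((1 / a) * Real.log (p / δ))) :=
  nicholson_global_stability_general δ p a hδ ha h μ φ hh_tend hμ_prob hμ_supp hμ_meas hφ_nonneg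
    hφ_pos x hx_cont hx_init hx_sol hδp hpe
end

section
/- Consider the Mackey–Glass equation with distributed delay under hypotheses (a2), (a4), (a5). If a ≤ b, then every solution x with positive initial condition satisfies lim_{t→∞} x(t) = 0 (extinction). -/
open MeasureTheory Filter Set Topology

/-!
On `[0, K]` the feedback `a v / (1 + v ^ γ)` is at most `a θ K` with `θ = mgRatio γ K < 1`,
while the decay `b v` is at least `a v`. Let `C` bound the initial data. The band `[0, C]` is
invariant: just after a first exit time the delayed values still lie in `[-ε, C + ε]`, so at the
level `C` the decay beats the feedback, and a dip of depth `m` below `0` within a time `η` would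
need `m ≤ 2 a m η`. Then let `L = limsup x`. As `h t → ∞`, the delayed values eventually lie in
`[0, L + ε]`, so whenever `x` exceeds `θ (L + ε) + ε` it decreases at rate at least `b ε`; hence
it eventually stays below that level. This gives `L ≤ θ L`, i.e. `L = 0`.
-/

noncomputable def mgFeedback (a γ v : ℝ) : ℝ := a * v / (1 + v ^ γ)

-- On `[0, K']` with `K ≤ K'`: below `K' / 2`, `v / (1 + v ^ γ) ≤ v ≤ K' / 2`; above it the
-- denominator is at least `1 + (K / 2) ^ γ`.
noncomputable def mgRatio (γ K : ℝ) : ℝ := max (1 / 2) (1 + (K / 2) ^ γ)⁻¹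

section RealBounds

variable {a γ ρ R m v K K' : ℝ}

-- For `v < 0`, `v ^ γ` is `Real.rpow` of a negative base, so `1 + v ^ γ` could vanish; only
-- `|v ^ γ| ≤ |v| ^ γ` is available to keep it away from `0`.
theorem half_le_one_add_rpow (hγ : 0 ≤ γ) (hργ : ρ ^ γ ≤ 1 / 2) (hv : -ρ ≤ v) :
    1 / 2 ≤ 1 + v ^ γ := by
  rcases le_or_gt 0 v with hv0 | hv0
  · linarith [Real.rpow_nonneg hv0 γ]
  · have : |v ^ γ| ≤ 1 / 2 := calc
      |v ^ γ| ≤ |v| ^ γ := Real.abs_rpow_le_abs_rpow v γ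
      _ ≤ ρ ^ γ := Real.rpow_le_rpow (abs_nonneg v) (by rw [abs_of_neg hv0]; linarith) hγ
      _ ≤ 1 / 2 := hργ
    linarith [neg_abs_le (v ^ γ)]

theorem measurable_mgFeedback : Measurable (mgFeedback a γ) := by
  unfold mgFeedback
  fun_prop

theorem mgFeedback_nonneg (ha : 0 ≤ a) (hv : 0 ≤ v) : 0 ≤ mgFeedback a γ v := by
  unfold mgFeedback
  have := Real.rpow_nonneg hv γ
  positivity

theorem abs_mgFeedback_le (ha : 0 ≤ a) (hγ : 0 ≤ γ) (hργ : ρ ^ γ ≤ 1 / 2) (hv : -ρ ≤ v) :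
    |mgFeedback a γ v| ≤ 2 * a * |v| := by
  have hd := half_le_one_add_rpow hγ hργ hv
  have hd0 : 0 < 1 + v ^ γ := by linarith
  rw [mgFeedback, abs_div, abs_mul, abs_of_nonneg ha, abs_of_pos hd0, div_le_iff₀ hd0]
  nlinarith [mul_nonneg ha (abs_nonneg v)]

theorem abs_mgFeedback_le_of_mem_Icc (ha : 0 ≤ a) (hγ : 0 ≤ γ) (hργ : ρ ^ γ ≤ 1 / 2)
    (hv : v ∈ Icc (-ρ) R) : |mgFeedback a γ v| ≤ 2 * a * (|ρ| + |R|) := by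
  refine (abs_mgFeedback_le ha hγ hργ hv.1).trans ?_
  gcongr
  exact abs_le.2 ⟨by linarith [le_abs_self ρ, abs_nonneg R, hv.1],
    by linarith [le_abs_self R, abs_nonneg ρ, hv.2]⟩

theorem neg_mul_le_mgFeedback (ha : 0 ≤ a) (hγ : 0 ≤ γ) (hργ : ρ ^ γ ≤ 1 / 2) (hv : -ρ ≤ v)
    (hm : 0 ≤ m) (hmv : -m ≤ v) : -(2 * a * m) ≤ mgFeedback a γ v := by
  rcases le_or_gt 0 v with hv0 | hv0
  · linarith [mgFeedback_nonneg (γ := γ) ha hv0, mul_nonneg (mul_nonneg zero_le_two ha) hm]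
  · have := abs_le.1 (abs_mgFeedback_le ha hγ hργ hv)
    rw [abs_of_neg hv0] at this
    nlinarith

theorem div_one_add_rpow_le_mgRatio_mul (hγ : 0 ≤ γ) (hv : 0 ≤ v) (hvK : v ≤ K') (hK : 0 ≤ K)
    (hKK : K ≤ K') : v / (1 + v ^ γ) ≤ mgRatio γ K * K' := by
  have hvγ := Real.rpow_nonneg hv γ
  rcases le_or_gt v (K' / 2) with hvK2 | hvK2
  · calc v / (1 + v ^ γ) ≤ v := div_le_self hv (by linarith)
      _ ≤ 1 / 2 * K' := by linarith
      _ ≤ mgRatio γ K * K' := by gcongr; exacts [by linarith, le_max_left _ _]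
  · have hKv : (K / 2) ^ γ ≤ v ^ γ := Real.rpow_le_rpow (by linarith) (by linarith) hγ
    have hK2 := Real.rpow_nonneg (by linarith : 0 ≤ K / 2) γ
    calc v / (1 + v ^ γ) ≤ K' / (1 + (K / 2) ^ γ) := by gcongr; linarith
      _ = (1 + (K / 2) ^ γ)⁻¹ * K' := by ring
      _ ≤ mgRatio γ K * K' := by gcongr; exacts [by linarith, le_max_right _ _]

theorem mgRatio_nonneg : 0 ≤ mgRatio γ K :=
  le_max_of_le_left (by norm_num)

theorem mgRatio_lt_one (hK : 0 < K) : mgRatio γ K < 1 :=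
  max_lt (by norm_num) (inv_lt_one_of_one_lt₀ (by linarith [Real.rpow_pos_of_pos (half_pos hK) γ]))

theorem mgFeedback_le (ha : 0 ≤ a) (hγ : 0 ≤ γ) (hργ : ρ ^ γ ≤ 1 / 2) (hv : -ρ ≤ v)
    (hvK : v ≤ K') (hK : 0 ≤ K) (hKK : K ≤ K') : mgFeedback a γ v ≤ a * (mgRatio γ K * K') := by
  rcases le_or_gt v 0 with hv0 | hv0
  · have hd := half_le_one_add_rpow hγ hργ hv
    calc mgFeedback a γ v ≤ 0 :=
          div_nonpos_of_nonpos_of_nonneg (mul_nonpos_of_nonneg_of_nonpos ha hv0) (by linarith)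
      _ ≤ a * (mgRatio γ K * K') := mul_nonneg ha (mul_nonneg mgRatio_nonneg (hK.trans hKK))
  · rw [mgFeedback, mul_div_assoc]
    exact mul_le_mul_of_nonneg_left (div_one_add_rpow_le_mgRatio_mul hγ hv0.le hvK hK hKK) ha

end RealBounds

section Barrier

variable {x H : ℝ → ℝ} {τ t c δ : ℝ}

theorem le_add_mul_of_integral_eq (hx : ContinuousOn x (Icc τ t)) (hτt : τ ≤ t)
    (hxH : ∀ s ∈ Icc τ t, x t - x s = ∫ u in s..t, H u) (hH : IntervalIntegrable H volume τ t)
    (hxτ : x τ ≤ c) (hδ : 0 ≤ δ) (hHδ : ∀ u ∈ Icc τ t, c < x u → H u ≤ δ) :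
    x t ≤ c + δ * (t - τ) := by
  have hS : IsCompact (Icc τ t ∩ x ⁻¹' Iic c) :=
    isCompact_Icc.of_isClosed_subset (hx.preimage_isClosed_of_isClosed isClosed_Icc isClosed_Iic)
      inter_subset_left
  obtain ⟨σ, ⟨hσ, hxσ⟩, hσmax⟩ := hS.exists_isGreatest ⟨τ, ⟨le_rfl, hτt⟩, hxτ⟩
  have hgt : ∀ u ∈ Ioo σ t, c < x u := fun u hu => lt_of_not_ge fun hxu =>
    hu.1.not_ge (hσmax ⟨⟨hσ.1.trans hu.1.le, hu.2.le⟩, hxu⟩)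
  calc x t = x σ + ∫ u in σ..t, H u := by linarith [hxH σ hσ]
    _ ≤ c + ∫ _ in σ..t, δ := by
        gcongr ?_ + ?_
        · exact hxσ
        refine intervalIntegral.integral_mono_on_of_le_Ioo hσ.2
          (hH.mono_set (uIcc_subset_uIcc_right (uIcc_of_le hτt ▸ hσ))) intervalIntegrable_const
          fun u hu => hHδ u ⟨hσ.1.trans hu.1.le, hu.2.le⟩ (hgt u hu)
    _ = c + δ * (t - σ) := by simp [mul_comm]
    _ ≤ c + δ * (t - τ) := by gcongr; exact hσ.1

theorem sub_mul_le_of_integral_eq (hx : ContinuousOn x (Icc τ t)) (hτt : τ ≤ t)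
    (hxH : ∀ s ∈ Icc τ t, x t - x s = ∫ u in s..t, H u) (hH : IntervalIntegrable H volume τ t)
    (hxτ : c ≤ x τ) (hδ : 0 ≤ δ) (hHδ : ∀ u ∈ Icc τ t, x u < c → -δ ≤ H u) :
    c - δ * (t - τ) ≤ x t := by
  have := le_add_mul_of_integral_eq (x := -x) (H := -H) (c := -c) hx.neg hτt
    (fun s hs => by simp [intervalIntegral.integral_neg, ← hxH s hs]; ring) hH.neg
    (by simpa using hxτ) hδ fun u hu hcu => neg_le.2 (hHδ u hu (by simpa using hcu))
  simp only [Pi.neg_apply] at this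
  linarith

theorem exists_le_of_integral_eq (hxH : ∀ t, τ ≤ t → x t - x τ = ∫ u in τ..t, H u)
    (hH : ∀ t, τ ≤ t → IntervalIntegrable H volume τ t) (hδ : 0 < δ)
    (hHδ : ∀ u, τ ≤ u → c < x u → H u ≤ -δ) : ∃ t, τ ≤ t ∧ x t ≤ c := by
  by_contra! hgt
  set T := τ + (x τ - c) / δ
  have hτT : τ ≤ T := le_add_of_nonneg_right (div_nonneg (sub_nonneg.2 (hgt τ le_rfl).le) hδ.le)
  have hint : ∫ u in τ..T, H u ≤ ∫ _ in τ..T, -δ :=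
    intervalIntegral.integral_mono_on hτT (hH T hτT) intervalIntegrable_const
      fun u hu => hHδ u hu.1 (hgt u hu.1)
  have hlen : (T - τ) * -δ = c - x τ := by simp only [T]; field_simp; ring
  rw [intervalIntegral.integral_const, smul_eq_mul, hlen] at hint
  linarith [hxH T hτT, hgt T hτT]

theorem eventually_le_of_integral_eq (hx : Continuous x)
    (hxH : ∀ t₁ t₂, τ ≤ t₁ → t₁ ≤ t₂ → x t₂ - x t₁ = ∫ u in t₁..t₂, H u)
    (hH : ∀ t₁ t₂, τ ≤ t₁ → t₁ ≤ t₂ → IntervalIntegrable H volume t₁ t₂) (hδ : 0 < δ)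
    (hHδ : ∀ u, τ ≤ u → c < x u → H u ≤ -δ) : ∀ᶠ t in atTop, x t ≤ c := by
  obtain ⟨τ', hττ', hxτ'⟩ :=
    exists_le_of_integral_eq (hxH τ · le_rfl) (hH τ · le_rfl) hδ hHδ
  filter_upwards [eventually_ge_atTop τ'] with t ht
  simpa using le_add_mul_of_integral_eq hx.continuousOn ht
    (fun s hs => hxH s t (hττ'.trans hs.1) hs.2) (hH τ' t hττ' ht) hxτ' le_rfl
    fun u hu hcu => (hHδ u (hττ'.trans hu.1) hcu).trans (neg_nonpos.2 hδ.le)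

end Barrier

structure IsMackeyGlassSolution (a b γ : ℝ) (h : ℝ → ℝ) (μ : ℝ → Measure ℝ) (x : ℝ → ℝ) :
    Prop where
  isProbabilityMeasure : ∀ t, 0 ≤ t → IsProbabilityMeasure (μ t)
  measure_compl_Icc : ∀ t, 0 ≤ t → μ t (Icc (h t) t)ᶜ = 0
  measurable_integral : ∀ g : ℝ → ℝ, Measurable g → (∃ C, ∀ y, |g y| ≤ C) →
    Measurable fun t => ∫ s, g s ∂μ t
  continuous : Continuous x
  eq_integral : ∀ t, 0 ≤ t →
    x t = x 0 + ∫ u in (0 : ℝ)..t, ((∫ s, mgFeedback a γ (x s) ∂μ u) - b * x u)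

namespace IsMackeyGlassSolution

variable {a b γ ρ R C K K' ε t₀ T u t₁ t₂ : ℝ} {h : ℝ → ℝ} {μ : ℝ → Measure ℝ} {x : ℝ → ℝ}

theorem ae_mem_Icc (hx : IsMackeyGlassSolution a b γ h μ x) (hu : 0 ≤ u) :
    ∀ᵐ s ∂μ u, s ∈ Icc (h u) u :=
  mem_ae_iff.2 (hx.measure_compl_Icc u hu)

theorem integrable_feedback (hx : IsMackeyGlassSolution a b γ h μ x) (ha : 0 ≤ a)
    (hγ : 0 ≤ γ) (hργ : ρ ^ γ ≤ 1 / 2) (hu : 0 ≤ u) (hW : ∀ s ∈ Icc (h u) u, x s ∈ Icc (-ρ) R) :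
    Integrable (fun s => mgFeedback a γ (x s)) (μ u) := by
  have := hx.isProbabilityMeasure u hu
  exact Integrable.of_bound
    (measurable_mgFeedback.comp hx.continuous.measurable).aestronglyMeasurable (2 * a * (|ρ| + |R|))
    ((hx.ae_mem_Icc hu).mono fun s hs => abs_mgFeedback_le_of_mem_Icc ha hγ hργ (hW s hs))

theorem feedback_mem (hx : IsMackeyGlassSolution a b γ h μ x) (ha : 0 ≤ a) (hγ : 0 ≤ γ)
    (hργ : ρ ^ γ ≤ 1 / 2) (hu : 0 ≤ u) (hW : ∀ s ∈ Icc (h u) u, x s ∈ Icc (-ρ) R) {S : Set ℝ}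
    (hS : Convex ℝ S) (hSc : IsClosed S) (hfS : ∀ s ∈ Icc (h u) u, mgFeedback a γ (x s) ∈ S) :
    ∫ s, mgFeedback a γ (x s) ∂μ u ∈ S := by
  have := hx.isProbabilityMeasure u hu
  exact hS.integral_mem hSc ((hx.ae_mem_Icc hu).mono hfS)
    (hx.integrable_feedback ha hγ hργ hu hW)

theorem intervalIntegrable (hx : IsMackeyGlassSolution a b γ h μ x) (ha : 0 ≤ a) (hγ : 0 ≤ γ)
    (hργ : ρ ^ γ ≤ 1 / 2) (ht₁ : 0 ≤ t₁) (ht : t₁ ≤ t₂) (hW : ∀ s ≤ t₂, x s ∈ Icc (-ρ) R) :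
    IntervalIntegrable (fun u => (∫ s, mgFeedback a γ (x s) ∂μ u) - b * x u) volume t₁ t₂ := by
  -- `mgFeedback a γ ∘ x` need not be bounded, so measurability in `u` is obtained for the
  -- truncation `g`, which agrees with it along `x` up to time `t₂`.
  set g := (Icc (-ρ) R).indicator (mgFeedback a γ)
  set B := 2 * a * (|ρ| + |R|)
  have hgB : ∀ v, |g v| ≤ B := by
    intro v
    by_cases hv : v ∈ Icc (-ρ) R
    · have hgv : g v = mgFeedback a γ v := indicator_of_mem hv _
      rw [hgv]
      exact abs_mgFeedback_le_of_mem_Icc ha hγ hργ hv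
    · have hgv : g v = 0 := indicator_of_notMem hv _
      rw [hgv, abs_zero]
      positivity
  have hG : IntervalIntegrable (fun u => ∫ s, g (x s) ∂μ u) volume t₁ t₂ := by
    rw [intervalIntegrable_iff_integrableOn_Ioc_of_le ht]
    refine Measure.integrableOn_of_bounded (M := B) (by simp)
      (hx.measurable_integral (g ∘ x) ((measurable_mgFeedback.indicator measurableSet_Icc).comp
        hx.continuous.measurable)
        ⟨B, fun y => hgB (x y)⟩).aestronglyMeasurable
      ((ae_restrict_mem measurableSet_Ioc).mono fun u hu => ?_)
    have := hx.isProbabilityMeasure u (ht₁.trans hu.1.le)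
    simpa using norm_integral_le_of_norm_le_const (μ := μ u) (f := fun s => g (x s))
      (Eventually.of_forall fun s => hgB (x s))
  refine (hG.congr fun u hu => ?_).sub ((hx.continuous.const_mul b).intervalIntegrable _ _)
  rw [uIoc_of_le ht] at hu
  refine integral_congr_ae ((hx.ae_mem_Icc (ht₁.trans hu.1.le)).mono fun s hs => ?_)
  exact indicator_of_mem (hW s (hs.2.trans hu.2)) _

theorem sub_eq_integral (hx : IsMackeyGlassSolution a b γ h μ x) (ha : 0 ≤ a) (hγ : 0 ≤ γ)
    (hργ : ρ ^ γ ≤ 1 / 2) (ht₁ : 0 ≤ t₁) (ht : t₁ ≤ t₂) (hW : ∀ s ≤ t₂, x s ∈ Icc (-ρ) R) :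
    x t₂ - x t₁ = ∫ u in t₁..t₂, ((∫ s, mgFeedback a γ (x s) ∂μ u) - b * x u) := by
  rw [hx.eq_integral t₂ (ht₁.trans ht), hx.eq_integral t₁ ht₁, add_sub_add_left_eq_sub,
    intervalIntegral.integral_interval_sub_left
      (hx.intervalIntegrable ha hγ hργ le_rfl (ht₁.trans ht) hW)
      (hx.intervalIntegrable ha hγ hργ le_rfl ht₁ fun s hs => hW s (hs.trans ht))]

theorem le_of_mem_Icc_of_le (hx : IsMackeyGlassSolution a b γ h μ x) (ha : 0 ≤ a) (hab : a ≤ b)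
    (hγ : 0 ≤ γ) (hργ : ρ ^ γ ≤ 1 / 2) (hC : 0 ≤ C) (hCR : C ≤ R) (hR : mgRatio γ C * R ≤ C)
    (ht₀ : 0 ≤ t₀) (hW : ∀ s ≤ T, x s ∈ Icc (-ρ) R) (hxt₀ : x t₀ ≤ C) :
    ∀ t ∈ Icc t₀ T, x t ≤ C := by
  intro t ht
  have hWt : ∀ s ≤ t, x s ∈ Icc (-ρ) R := fun s hs => hW s (hs.trans ht.2)
  simpa using le_add_mul_of_integral_eq (δ := 0) hx.continuous.continuousOn ht.1
    (fun s hs => hx.sub_eq_integral ha hγ hργ (ht₀.trans hs.1) hs.2 hWt)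
    (hx.intervalIntegrable ha hγ hργ ht₀ ht.1 hWt) hxt₀ le_rfl fun u hu hCu => by
      have hF := hx.feedback_mem ha hγ hργ (ht₀.trans hu.1) (fun s hs => hWt s (hs.2.trans hu.2))
        (convex_Iic _) isClosed_Iic fun s hs =>
          mgFeedback_le ha hγ hργ (hWt s (hs.2.trans hu.2)).1 (hWt s (hs.2.trans hu.2)).2 hC hCR
      have hb : 0 ≤ b := ha.trans hab
      nlinarith [mem_Iic.1 hF, mul_le_mul_of_nonneg_left hR ha, mul_le_mul_of_nonneg_right hab hC]

theorem nonneg_of_mem_Icc_of_nonneg (hx : IsMackeyGlassSolution a b γ h μ x) (ha : 0 ≤ a)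
    (hb : 0 ≤ b) (hγ : 0 ≤ γ) (hργ : ρ ^ γ ≤ 1 / 2) (ht₀ : 0 ≤ t₀) (hT : t₀ ≤ T)
    (hshort : 2 * a * (T - t₀) < 1) (hW : ∀ s ≤ T, x s ∈ Icc (-ρ) R)
    (hpos : ∀ s ≤ t₀, 0 ≤ x s) : ∀ t ∈ Icc t₀ T, 0 ≤ x t := by
  obtain ⟨tm, htm, hmin⟩ :=
    isCompact_Icc.exists_isMinOn (nonempty_Icc.2 hT) hx.continuous.continuousOn
  intro t ht
  refine le_trans ?_ (hmin ht)
  by_contra! hneg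
  -- `m` is the depth of the dip below zero; on a window shorter than `1 / (2 a)` the feedback,
  -- at least `-2 a m`, cannot push `x` that deep.
  set m := -x tm with hm
  have hm0 : 0 ≤ 2 * a * m := mul_nonneg (mul_nonneg zero_le_two ha) (by linarith)
  have hlow : ∀ s ≤ T, -m ≤ x s := fun s hs => by
    rcases le_or_gt s t₀ with hst | hst
    · linarith [hpos s hst]
    · simpa [hm] using hmin ⟨hst.le, hs⟩
  have hWm : ∀ s ≤ tm, x s ∈ Icc (-ρ) R := fun s hs => hW s (hs.trans htm.2)
  have hdip := sub_mul_le_of_integral_eq (c := 0) (δ := 2 * a * m) hx.continuous.continuousOn htm.1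
    (fun s hs => hx.sub_eq_integral ha hγ hργ (ht₀.trans hs.1) hs.2 hWm)
    (hx.intervalIntegrable ha hγ hργ ht₀ htm.1 hWm) (hpos t₀ le_rfl) hm0
    fun u hu hxu => by
      have hF := hx.feedback_mem ha hγ hργ (ht₀.trans hu.1) (fun s hs => hWm s (hs.2.trans hu.2))
        (convex_Ici _) isClosed_Ici fun s hs => neg_mul_le_mgFeedback ha hγ hργ
          (hWm s (hs.2.trans hu.2)).1 (by linarith) (hlow s (hs.2.trans (hu.2.trans htm.2)))
      nlinarith [mem_Ici.1 hF, mul_nonneg hb (neg_nonneg.2 hxu.le)]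
  have : 2 * a * m * (tm - t₀) ≤ 2 * a * m * (T - t₀) := by
    gcongr
    exact htm.2
  nlinarith

theorem eventually_mem_Icc (hx : IsMackeyGlassSolution a b γ h μ x) (ha : 0 ≤ a) (hab : a ≤ b)
    (hγ : 0 < γ) (hC : 0 < C) (ht₀ : 0 ≤ t₀) (hhist : ∀ s ≤ t₀, x s ∈ Icc 0 C) :
    ∀ᶠ t in 𝓝[>] t₀, x t ∈ Icc 0 C := by
  have hθ := mgRatio_lt_one (γ := γ) hC
  obtain ⟨ρ, ⟨hργ, hρR⟩, hρ⟩ : ∃ ρ, (ρ ^ γ < 1 / 2 ∧ mgRatio γ C * (C + ρ) < C) ∧ 0 < ρ := by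
    have hpow : Tendsto (· ^ γ) (𝓝 (0 : ℝ)) (𝓝 0) := by
      simpa [Real.zero_rpow hγ.ne'] using
        (Real.continuousAt_rpow_const 0 γ (Or.inr hγ.le)).tendsto
    have hlin : Tendsto (fun ρ => mgRatio γ C * (C + ρ)) (𝓝 0) (𝓝 (mgRatio γ C * C)) := by
      simpa using (by fun_prop : Continuous fun ρ : ℝ => mgRatio γ C * (C + ρ)).tendsto 0
    have : ∀ᶠ ρ in 𝓝[>] (0 : ℝ), (ρ ^ γ < 1 / 2 ∧ mgRatio γ C * (C + ρ) < C) ∧ 0 < ρ :=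
      (((hpow.eventually_lt_const (by norm_num)).and (hlin.eventually_lt_const
        (by nlinarith))).filter_mono nhdsWithin_le_nhds).and self_mem_nhdsWithin
    exact this.exists
  have hxt₀ := hhist t₀ le_rfl
  have hnear : ∀ᶠ s in 𝓝 t₀, x s ∈ Ioo (x t₀ - ρ) (x t₀ + ρ) ∧ 2 * a * (s - t₀) < 1 :=
    (hx.continuous.continuousAt.eventually (Ioo_mem_nhds (by linarith) (by linarith))).and
      (((continuous_const.mul (continuous_id.sub continuous_const)).tendsto t₀).eventually_lt_const
        (by simp))
  obtain ⟨T, hT, hTsub⟩ :=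
    mem_nhdsGE_iff_exists_Icc_subset.1 (nhdsWithin_le_nhds hnear)
  have hW : ∀ s ≤ T, x s ∈ Icc (-ρ) (C + ρ) := fun s hs => by
    rcases le_or_gt s t₀ with hst | hst
    · exact ⟨by linarith [(hhist s hst).1], by linarith [(hhist s hst).2]⟩
    · have := (hTsub ⟨hst.le, hs⟩).1
      exact ⟨by linarith [this.1, hxt₀.1], by linarith [this.2, hxt₀.2]⟩
  have hshort : 2 * a * (T - t₀) < 1 := (hTsub ⟨hT.le, le_rfl⟩).2
  refine mem_nhdsGT_iff_exists_Ioo_subset.2 ⟨T, hT, fun t ht => ⟨?_, ?_⟩⟩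
  · exact hx.nonneg_of_mem_Icc_of_nonneg ha (ha.trans hab) hγ.le hργ.le ht₀ hT.le hshort hW
      (fun s hs => (hhist s hs).1) t (Ioo_subset_Icc_self ht)
  · exact hx.le_of_mem_Icc_of_le ha hab hγ.le hργ.le hC.le (by linarith) hρR.le ht₀ hW hxt₀.2 t
      (Ioo_subset_Icc_self ht)

theorem forall_mem_Icc (hx : IsMackeyGlassSolution a b γ h μ x) (ha : 0 ≤ a) (hab : a ≤ b)
    (hγ : 0 < γ) (hC : 0 < C) (hhist : ∀ t ≤ 0, x t ∈ Icc 0 C) : ∀ t, x t ∈ Icc 0 C := by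
  intro t
  rcases le_or_gt t 0 with ht | ht
  · exact hhist t ht
  have hclosed : IsClosed ({s | x s ∈ Icc 0 C} ∩ Icc 0 t) :=
    (isClosed_Icc.preimage hx.continuous).inter isClosed_Icc
  refine hclosed.Icc_subset_of_forall_mem_nhdsGT_of_Icc_subset (hhist 0 le_rfl)
    (fun s hs hsub => hx.eventually_mem_Icc ha hab hγ hC hs.1 fun r hr => ?_) ⟨ht.le, le_rfl⟩
  rcases le_or_gt r 0 with hr0 | hr0
  · exact hhist r hr0
  · exact hsub ⟨hr0.le, hr⟩

theorem eventually_le_mgRatio_mul (hx : IsMackeyGlassSolution a b γ h μ x) (ha : 0 ≤ a)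
    (hab : a ≤ b) (hb : 0 < b) (hγ : 0 < γ) (hh : Tendsto h atTop atTop)
    (hbd : ∀ t, x t ∈ Icc 0 C) (hK : 0 ≤ K) (hKK : K ≤ K') (hev : ∀ᶠ t in atTop, x t ≤ K')
    (hε : 0 < ε) : ∀ᶠ t in atTop, x t ≤ mgRatio γ K * K' + ε := by
  have h0γ : (0 : ℝ) ^ γ ≤ 1 / 2 := by rw [Real.zero_rpow hγ.ne']; norm_num
  have hW : ∀ s, x s ∈ Icc (-0) C := by simpa using hbd
  obtain ⟨T₀, hT₀⟩ := eventually_atTop.1 hev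
  obtain ⟨τ, hτ⟩ := eventually_atTop.1 (hh.eventually_ge_atTop T₀)
  refine eventually_le_of_integral_eq (τ := max τ 0) (δ := b * ε) hx.continuous
    (fun t₁ t₂ h₁ h₂ => hx.sub_eq_integral ha hγ.le h0γ (le_of_max_le_right h₁) h₂ fun s _ => hW s)
    (fun t₁ t₂ h₁ h₂ => hx.intervalIntegrable ha hγ.le h0γ (le_of_max_le_right h₁) h₂
      fun s _ => hW s) (mul_pos hb hε) fun u hu hxu => ?_
  have hF := hx.feedback_mem ha hγ.le h0γ (le_of_max_le_right hu) (fun s _ => hW s)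
    (convex_Iic _) isClosed_Iic fun s hs => mgFeedback_le ha hγ.le h0γ (hW s).1
      (hT₀ s ((hτ u (le_of_max_le_left hu)).trans hs.1)) hK hKK
  have hθ : 0 ≤ mgRatio γ K * K' := mul_nonneg mgRatio_nonneg (hK.trans hKK)
  nlinarith [mem_Iic.1 hF, mul_le_mul_of_nonneg_right hab hθ]

theorem tendsto_zero (hx : IsMackeyGlassSolution a b γ h μ x) (ha : 0 ≤ a) (hab : a ≤ b)
    (hb : 0 < b) (hγ : 0 < γ) (hh : Tendsto h atTop atTop) (hbd : ∀ t, x t ∈ Icc 0 C) :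
    Tendsto x atTop (𝓝 0) := by
  have hbdd : IsBoundedUnder (· ≤ ·) atTop x := isBoundedUnder_of ⟨C, fun t => (hbd t).2⟩
  have hcobdd : IsCoboundedUnder (· ≤ ·) atTop x :=
    isCoboundedUnder_le_of_le atTop fun t => (hbd t).1
  have hL : limsup x atTop ≤ 0 := by
    set L := limsup x atTop
    by_contra! hL
    have hθ := mgRatio_lt_one (γ := γ) hL
    have hLθ : L ≤ mgRatio γ L * L := le_of_forall_pos_le_add fun ε hε => by
      have hev := hx.eventually_le_mgRatio_mul ha hab hb hγ hh hbd hL.le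
        (le_add_of_nonneg_right (half_pos hε).le)
        ((eventually_lt_of_limsup_lt (lt_add_of_pos_right L (half_pos hε)) hbdd).mono
          fun _ => le_of_lt) (half_pos hε)
      have := limsup_le_of_le hcobdd hev
      nlinarith [mgRatio_nonneg (γ := γ) (K := L)]
    nlinarith
  exact tendsto_order.2 ⟨fun c hc => Eventually.of_forall fun t => hc.trans_le (hbd t).1,
    fun c hc => eventually_lt_of_limsup_lt (hL.trans_lt hc) hbdd⟩

end IsMackeyGlassSolution

theorem mackey_glass_extinction_general
    (a b γ : ℝ) (ha : 0 < a) (hb : 0 < b) (hγ : 0 < γ)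
    (h : ℝ → ℝ) (μ : ℝ → Measure ℝ) (φ : ℝ → ℝ)
    (hh_tend : Tendsto h atTop atTop)
    (hμ_prob : ∀ t : ℝ, 0 ≤ t → IsProbabilityMeasure (μ t))
    (hμ_supp : ∀ t : ℝ, 0 ≤ t → μ t (Icc (h t) t)ᶜ = 0)
    (hμ_meas : ∀ g : ℝ → ℝ, Measurable g → (∃ C : ℝ, ∀ y : ℝ, |g y| ≤ C) →
      Measurable (fun t => ∫ s, g s ∂(μ t)))
    (hφ_bdd : ∃ C : ℝ, ∀ t : ℝ, t ≤ 0 → |φ t| ≤ C)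
    (hφ_nonneg : ∀ t : ℝ, t ≤ 0 → 0 ≤ φ t)
    (hφ_pos : 0 < φ 0)
    (x : ℝ → ℝ)
    (hx_cont : Continuous x)
    (hx_init : ∀ t : ℝ, t ≤ 0 → x t = φ t)
    (hx_sol : ∀ t : ℝ, 0 ≤ t →
      x t = φ 0 + ∫ u in (0:ℝ)..t,
        ((∫ s, (a * x s) / (1 + x s ^ γ) ∂(μ u)) - b * x u))
    (hab : a ≤ b) :
    Tendsto x atTop (nhds 0) := by
  obtain ⟨C, hC⟩ := hφ_bdd
  have hx : IsMackeyGlassSolution a b γ h μ x :=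
    ⟨hμ_prob, hμ_supp, hμ_meas, hx_cont, fun t ht => by rw [hx_init 0 le_rfl]; exact hx_sol t ht⟩
  have hhist : ∀ t ≤ 0, x t ∈ Icc 0 C := fun t ht => by
    rw [hx_init t ht]
    exact ⟨hφ_nonneg t ht, (le_abs_self _).trans (hC t ht)⟩
  have hC0 : 0 < C := (hx_init 0 le_rfl ▸ hφ_pos).trans_le (hhist 0 le_rfl).2
  exact hx.tendsto_zero ha.le hab hb hγ hh_tend (hx.forall_mem_Icc ha.le hab hγ hC0 hhist)

theorem mackey_glass_extinction
    (a b γ : ℝ) (ha : 0 < a) (hb : 0 < b) (hγ : 0 < γ)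
    (h : ℝ → ℝ) (μ : ℝ → Measure ℝ) (φ : ℝ → ℝ)
    (hh_meas : Measurable h)
    (hh_le : ∀ t : ℝ, 0 ≤ t → h t ≤ t)
    (hh_tend : Tendsto h atTop atTop)
    (hμ_prob : ∀ t : ℝ, 0 ≤ t → IsProbabilityMeasure (μ t))
    (hμ_supp : ∀ t : ℝ, 0 ≤ t → μ t (Icc (h t) t)ᶜ = 0)
    (hμ_meas : ∀ g : ℝ → ℝ, Measurable g → (∃ C : ℝ, ∀ y : ℝ, |g y| ≤ C) →
      Measurable (fun t => ∫ s, g s ∂(μ t)))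
    (hφ_cont : ContinuousOn φ (Iic (0 : ℝ)))
    (hφ_bdd : ∃ C : ℝ, ∀ t : ℝ, t ≤ 0 → |φ t| ≤ C)
    (hφ_nonneg : ∀ t : ℝ, t ≤ 0 → 0 ≤ φ t)
    (hφ_pos : 0 < φ 0)
    (x : ℝ → ℝ)
    (hx_cont : Continuous x)
    (hx_init : ∀ t : ℝ, t ≤ 0 → x t = φ t)
    (hx_sol : ∀ t : ℝ, 0 ≤ t →
      x t = φ 0 + ∫ u in (0:ℝ)..t,
        ((∫ s, (a * x s) / (1 + x s ^ γ) ∂(μ u)) - b * x u))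
    (hab : a ≤ b) :
    Tendsto x atTop (nhds 0) :=
  mackey_glass_extinction_general a b γ ha hb hγ h μ φ hh_tend hμ_prob hμ_supp hμ_meas hφ_bdd
    hφ_nonneg hφ_pos x hx_cont hx_init hx_sol hab
end
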